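/- arXiv:2309.11203 — 2 statements merged into one kernel-verified Lean document; each statement's English description precedes it below -/
import Mathlib

section
/- Let G be a simple graph on a finite vertex set of cardinality n, with c connected components. Then the maximal number of colors used by a Gallai coloring of G equals n − c. Precisely, n − c is the greatest element of the set of natural numbers k for which there exists a Gallai edge coloring of G whose image has exactly k elements. -/
/-
Upper bound: picking one edge of each colour gives a subgraph with as many edges as colours and
no cycle, since every cycle of `G` repeats a colour. A forest with `k` edges on `n` vertices has
`n - k` components, and removing edges from `G` cannot decrease the number of components, so
`k ≤ n - c`.

Lower bound: choose a root in every component and order the vertices lexicographically by their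
distance to the root and then arbitrarily; colour each edge by its larger endpoint. The largest
vertex of a cycle gives its colour to both cycle edges at it, so the colouring is Gallai. A root
is smaller than all its neighbours, while every other vertex has a neighbour closer to the root,
so the colours used are exactly the `n - c` non-root vertices.
-/

/-- A Gallai coloring of a simple graph: a coloring of its edge set such that every
cycle contains two distinct edges with the same color (no rainbow cycle). -/
def IsGallaiColoring {V C : Type*} (G : SimpleGraph V) (ε : G.edgeSet → C) : Prop :=
  ∀ (v : V) (w : G.Walk v v), w.IsCycle →
    ∃ e f : G.edgeSet, ↑e ∈ w.edges ∧ ↑f ∈ w.edges ∧ e ≠ f ∧ ε e = ε f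

section

open Function SimpleGraph

variable {V C : Type*} {G : SimpleGraph V}

lemma IsGallaiColoring.comp {D : Type*} {ε : G.edgeSet → C} (hε : IsGallaiColoring G ε)
    (g : C → D) : IsGallaiColoring G (g ∘ ε) := fun v w hw ↦
  let ⟨e, f, he, hf, hne, hef⟩ := hε v w hw
  ⟨e, f, he, hf, hne, congrArg g hef⟩

namespace SimpleGraph

lemma Walk.IsCycle.exists_ne_mem_edges {v m : V} {w : G.Walk v v} (hw : w.IsCycle)
    (hm : m ∈ w.support) : ∃ u b, u ≠ b ∧ s(m, u) ∈ w.edges ∧ s(m, b) ∈ w.edges := by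
  obtain ⟨u, b, hub, hnbrs⟩ := Set.ncard_eq_two.mp (hw.ncard_neighborSet_toSubgraph_eq_two hm)
  have hedge : ∀ x ∈ w.toSubgraph.neighborSet m, s(m, x) ∈ w.edges := fun x hx ↦
    w.mem_edges_toSubgraph.mp (w.toSubgraph.mem_edgeSet.mpr hx)
  exact ⟨u, b, hub, hedge u (by simp [hnbrs]), hedge b (by simp [hnbrs])⟩

section SupEdgeColoring

variable {α : Type*} [LinearOrder α]

def supEdgeColoring (G : SimpleGraph V) (f : V → α) (e : G.edgeSet) : α := (e.1.map f).sup

@[simp]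
lemma supEdgeColoring_mk (f : V → α) {a b : V} (h : s(a, b) ∈ G.edgeSet) :
    G.supEdgeColoring f ⟨s(a, b), h⟩ = max (f a) (f b) := rfl

lemma isGallaiColoring_supEdgeColoring (f : V → α) :
    IsGallaiColoring G (G.supEdgeColoring f) := by
  classical
  intro v w hw
  obtain ⟨m, hm, hmax⟩ := w.support.toFinset.exists_max_image f ⟨v, by simp⟩
  obtain ⟨u, b, hub, hu, hb⟩ := hw.exists_ne_mem_edges (List.mem_toFinset.mp hm)
  have hcolor : ∀ x (hx : s(m, x) ∈ w.edges),
      G.supEdgeColoring f ⟨s(m, x), w.edges_subset_edgeSet hx⟩ = f m := fun x hx ↦ by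
    simpa using hmax x (List.mem_toFinset.mpr (w.snd_mem_support_of_mem_edges hx))
  refine ⟨⟨_, w.edges_subset_edgeSet hu⟩, ⟨_, w.edges_subset_edgeSet hb⟩, hu, hb, ?_,
    by rw [hcolor u hu, hcolor b hb]⟩
  exact fun h ↦ hub (Sym2.congr_right.mp (congrArg Subtype.val h))

lemma range_supEdgeColoring {f : V → α} (hf : Injective f) :
    Set.range (G.supEdgeColoring f) = f '' {v | ∃ u, G.Adj v u ∧ f u < f v} := by
  ext x
  constructor
  · rintro ⟨⟨e, he⟩, rfl⟩
    induction e using Sym2.ind with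
    | _ a b =>
      have hab := G.mem_edgeSet.mp he
      rcases lt_or_gt_of_ne (hf.ne hab.ne) with h | h
      · exact ⟨b, ⟨a, hab.symm, h⟩, by simp [h.le]⟩
      · exact ⟨a, ⟨b, hab, h⟩, by simp [h.le]⟩
  · rintro ⟨v, ⟨u, hvu, hlt⟩, rfl⟩
    exact ⟨⟨s(v, u), G.mem_edgeSet.mpr hvu⟩, by simp [hlt.le]⟩

end SupEdgeColoring

section ComponentRoot

noncomputable def componentRoot (G : SimpleGraph V) (v : V) : V :=
  (G.connectedComponentMk v).out

lemma reachable_componentRoot (v : V) : G.Reachable v (G.componentRoot v) :=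
  ConnectedComponent.exact (Quot.out_eq _).symm

lemma componentRoot_eq_of_reachable {u v : V} (h : G.Reachable u v) :
    G.componentRoot u = G.componentRoot v :=
  congrArg Quot.out (ConnectedComponent.sound h)

lemma ncard_setOf_componentRoot_ne [Finite V] :
    {v | G.componentRoot v ≠ v}.ncard = Nat.card V - Nat.card G.ConnectedComponent := by
  have hout : Injective (Quot.out : G.ConnectedComponent → V) :=
    LeftInverse.injective (g := G.connectedComponentMk) Quot.out_eq
  have hroots :
      {v | G.componentRoot v ≠ v} = (Set.range (Quot.out : G.ConnectedComponent → V))ᶜ := by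
    ext v
    show G.componentRoot v ≠ v ↔ v ∉ Set.range _
    refine not_congr ⟨fun h ↦ ⟨_, h⟩, ?_⟩
    rintro ⟨c, rfl⟩
    exact congrArg Quot.out (Quot.out_eq c)
  rw [hroots, Set.ncard_compl, Set.ncard_range_of_injective hout]
  rfl

lemma exists_adj_dist_lt {v r : V} (h : G.dist v r ≠ 0) :
    ∃ u, G.Adj v u ∧ G.dist u r < G.dist v r := by
  obtain ⟨p, hp⟩ := (Reachable.of_dist_ne_zero h).exists_walk_length_eq_dist
  have hnil : ¬p.Nil := by simpa [← Walk.length_eq_zero_iff, hp] using h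
  refine ⟨p.snd, p.adj_snd hnil, ?_⟩
  have := dist_le p.tail
  have := p.length_tail_add_one hnil
  omega

noncomputable def bfsKey (G : SimpleGraph V) (idx : V → ℕ) (v : V) : ℕ ×ₗ ℕ :=
  toLex (G.dist v (G.componentRoot v), idx v)

lemma bfsKey_injective {idx : V → ℕ} (hidx : Injective idx) : Injective (G.bfsKey idx) :=
  fun _ _ h ↦ hidx (congrArg Prod.snd (toLex.injective h))

lemma setOf_exists_adj_bfsKey_lt (idx : V → ℕ) :
    {v | ∃ u, G.Adj v u ∧ G.bfsKey idx u < G.bfsKey idx v} = {v | G.componentRoot v ≠ v} := by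
  ext v
  constructor
  · rintro ⟨u, hvu, hlt⟩ hroot
    have hru : G.componentRoot u = v :=
      (componentRoot_eq_of_reachable hvu.symm.reachable).trans hroot
    have hdist : G.dist u v = 0 := by
      have h := Prod.Lex.lt_iff.mp hlt
      simp only [bfsKey, ofLex_toLex, hru, hroot, dist_self] at h
      omega
    exact hvu.ne ((hvu.symm.reachable.dist_eq_zero_iff.mp hdist).symm)
  · intro hv
    obtain ⟨u, hvu, hlt⟩ := exists_adj_dist_lt
      (dist_ne_zero_iff_ne_and_reachable.mpr ⟨Ne.symm hv, reachable_componentRoot v⟩)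
    refine ⟨u, hvu, Prod.Lex.lt_iff.mpr (Or.inl ?_)⟩
    simpa [bfsKey, componentRoot_eq_of_reachable hvu.symm.reachable] using hlt

end ComponentRoot

theorem exists_isGallaiColoring_ncard_range_eq [Finite V] (G : SimpleGraph V) :
    ∃ ε : G.edgeSet → ℕ, IsGallaiColoring G ε ∧
      (Set.range ε).ncard = Nat.card V - Nat.card G.ConnectedComponent := by
  obtain ⟨idx, hidx⟩ := exists_injective_nat V
  let encode : ℕ ×ₗ ℕ ≃ ℕ := ofLex.trans Nat.pairEquiv
  refine ⟨encode ∘ G.supEdgeColoring (G.bfsKey idx),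
    (isGallaiColoring_supEdgeColoring _).comp encode, ?_⟩
  rw [Set.range_comp, Set.ncard_image_of_injective _ encode.injective,
    range_supEdgeColoring (bfsKey_injective hidx),
    Set.ncard_image_of_injective _ (bfsKey_injective hidx), setOf_exists_adj_bfsKey_lt,
    ncard_setOf_componentRoot_ne]

lemma IsBridge.card_connectedComponent_lt [Finite V] {u v : V} (hadj : G.Adj u v)
    (hbr : G.IsBridge s(u, v)) :
    Nat.card G.ConnectedComponent < Nat.card (G.deleteEdges {s(u, v)}).ConnectedComponent := by
  have hsurj := ConnectedComponent.surjective_map_ofLE (G.deleteEdges_le {s(u, v)})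
  refine lt_of_not_ge fun hle ↦ hbr (ConnectedComponent.exact ?_)
  apply (hsurj.bijective_of_nat_card_le hle).injective
  simpa [ConnectedComponent.map_mk] using ConnectedComponent.sound hadj.reachable

lemma IsAcyclic.ncard_edgeSet_add_card_connectedComponent_le [Finite V] (hG : G.IsAcyclic) :
    G.edgeSet.ncard + Nat.card G.ConnectedComponent ≤ Nat.card V := by
  generalize hm : G.edgeSet.ncard = m
  induction m generalizing G with
  | zero => simpa using Nat.card_le_card_of_surjective G.connectedComponentMk Quot.mk_surjective
  | succ m ih =>
    obtain ⟨e, he⟩ := Set.nonempty_of_ncard_ne_zero (by omega : G.edgeSet.ncard ≠ 0)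
    induction e using Sym2.ind with
    | _ a b =>
      have hadj := G.mem_edgeSet.mp he
      have hlt := (isAcyclic_iff_forall_adj_isBridge.mp hG hadj).card_connectedComponent_lt hadj
      have := ih (hG.anti (G.deleteEdges_le _))
        (by rw [edgeSet_deleteEdges, Set.ncard_sdiff_singleton_of_mem he, hm, Nat.add_sub_cancel])
      omega

end SimpleGraph

namespace IsGallaiColoring

variable {ε : G.edgeSet → C}

lemma isAcyclic_fromEdgeSet (hε : IsGallaiColoring G ε) {S : Set G.edgeSet}
    (hS : S.InjOn ε) : (fromEdgeSet (Subtype.val '' S)).IsAcyclic := by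
  intro v w hw
  have hS_of_mem : ∀ e ∈ w.edges, ∃ e' ∈ S, ↑e' = e := fun e he ↦
    ((edgeSet_fromEdgeSet _).subset (w.edges_subset_edgeSet he)).1
  have hG : ∀ e ∈ w.edges, e ∈ G.edgeSet := fun e he ↦ by
    obtain ⟨e', -, rfl⟩ := hS_of_mem e he
    exact e'.2
  obtain ⟨e, f, he, hf, hne, hef⟩ := hε v (w.transfer G hG) (hw.transfer hG)
  rw [Walk.edges_transfer] at he hf
  have hmem : ∀ {e : G.edgeSet}, ↑e ∈ w.edges → e ∈ S := fun he ↦ by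
    obtain ⟨e', he', h⟩ := hS_of_mem _ he
    rwa [← Subtype.ext h]
  exact hne (hS (hmem he) (hmem hf) hef)

theorem ncard_range_add_card_connectedComponent_le [Finite V] (hε : IsGallaiColoring G ε) :
    (Set.range ε).ncard + Nat.card G.ConnectedComponent ≤ Nat.card V := by
  obtain ⟨S, hSε, hSinj⟩ := Set.exists_image_eq_and_injOn Set.univ ε
  have hSG : Subtype.val '' S ⊆ G.edgeSet := by
    rintro _ ⟨e, -, rfl⟩
    exact e.2
  have hdiag : Disjoint (Subtype.val '' S) Sym2.diagSet :=
    Set.disjoint_left.mpr fun _ he ↦ G.not_isDiag_of_mem_edgeSet (hSG he)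
  have hedges : (fromEdgeSet (Subtype.val '' S)).edgeSet.ncard = (Set.range ε).ncard := by
    rw [edgeSet_fromEdgeSet, hdiag.sdiff_eq_left,
      Set.ncard_image_of_injective _ Subtype.val_injective, ← hSinj.ncard_image, hSε,
      Set.image_univ]
  have hforest := (hε.isAcyclic_fromEdgeSet hSinj).ncard_edgeSet_add_card_connectedComponent_le
  have hmono := ConnectedComponent.card_le_card_of_le
    ((fromEdgeSet_le G).mpr (Set.sdiff_subset.trans hSG))
  omega

end IsGallaiColoring

end

/-- For a simple graph `G` on `n` vertices with `c` connected components, the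
maximal number of colors used by a Gallai coloring of `G` is `n - c`:
`n - c` is the greatest `k` such that some Gallai coloring of `G` uses exactly
`k` colors. -/
theorem gallai_max_colors_eq_card_sub_components {V : Type*} [Fintype V]
    (G : SimpleGraph V) (n c : ℕ) (hn : Fintype.card V = n)
    (hc : Nat.card G.ConnectedComponent = c) :
    IsGreatest {k : ℕ | ∃ ε : G.edgeSet → ℕ,
      IsGallaiColoring G ε ∧ (Set.range ε).ncard = k} (n - c) := by
  subst hn hc
  rw [← Nat.card_eq_fintype_card]
  refine ⟨G.exists_isGallaiColoring_ncard_range_eq, ?_⟩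
  rintro k ⟨ε, hε, rfl⟩
  have := hε.ncard_range_add_card_connectedComponent_le
  omega
end

section
/- Let n ≥ 2 and fix a Hamiltonian path of the complete graph K_n, given by a bijection v from {1,…,n} to the vertex set. Then the number of maximal Gallai partitions of K_n for which this path is rainbow—i.e., partitions of the edge set of K_n into exactly n − 1 nonempty blocks such that every cycle of K_n has two distinct edges in a common block and such that the n − 1 edges {v(i), v(i+1)}, 1 ≤ i ≤ n−1, lie in pairwise distinct blocks—equals the Catalan number C_{n−1} = (1/n)·binomial(2n−2, n−1). -/
/-!
Number the vertices by their position on the path. If the path is rainbow and there are `n - 1`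
blocks, every block contains exactly one path edge, so the partition is a colouring `c i j` of the
edges in which `{i, i + 1}` has colour `i`; on triangles the Gallai condition then forces
`i ≤ c i j < j` and `c i j ∈ {c i k, c k j}` for `i < k < j`. Every edge crossing the cut at the
root colour `r = c 0 (n - 1)` has colour `r`, so `c` splits into colourings of the two sides:
these colourings are exactly the lowest-common-ancestor maps of binary trees with `n - 1` nodes,
counted by `C_{n-1}`. Conversely such a colouring is Gallai on every cycle, not only on triangles:
a cycle whose positions span `[a, b]` crosses the cut at `c a b` at least twice, and each crossing
edge has colour `c a b`.
-/

/-- The edge set of the complete graph `K_n` on vertices `0, …, n-1`, encoded as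
ordered pairs `(i, j)` with `i < j` (one for each unordered edge `{i, j}`). -/
abbrev KEdge (n : ℕ) := {p : Fin n × Fin n // p.1 < p.2}

/-- A partition of the edge set of `K_n` (encoded as a setoid, whose classes are the
nonempty blocks) is a Gallai partition if every cycle of `K_n` contains two distinct
edges lying in a common block. -/
def IsGallaiPartition {n : ℕ} (S : Setoid (KEdge n)) : Prop :=
  ∀ (v : Fin n) (w : (⊤ : SimpleGraph (Fin n)).Walk v v), w.IsCycle →
    ∃ p q : KEdge n, s(p.1.1, p.1.2) ∈ w.edges ∧ s(q.1.1, q.1.2) ∈ w.edges ∧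
      p ≠ q ∧ S.r p q

/-- The ordered version of the unordered pair `{a, b}`. -/
def unedge {n : ℕ} (a b : Fin n) : Fin n × Fin n := if a < b then (a, b) else (b, a)

theorem unedge_lt {n : ℕ} {a b : Fin n} (h : a ≠ b) :
    (unedge a b).1 < (unedge a b).2 := by
  unfold unedge
  rcases h.lt_or_gt with h1 | h1
  · rw [if_pos h1]; exact h1
  · rw [if_neg (asymm h1)]; exact h1

/-- The edge `{a, b}` of `K_n`, for distinct vertices `a` and `b`. -/
def mkKEdge {n : ℕ} (a b : Fin n) (h : a ≠ b) : KEdge n := ⟨unedge a b, unedge_lt h⟩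

/-- The `i`-th edge of the Hamiltonian path determined by the vertex ordering `v`,
namely the edge `{v i, v (i+1)}`. -/
def pathEdge {n : ℕ} (v : Equiv.Perm (Fin n)) (i : Fin (n - 1)) : KEdge n :=
  mkKEdge (v ⟨i.1, lt_of_lt_of_le i.2 (Nat.sub_le n 1)⟩)
    (v ⟨i.1 + 1, by have := i.2; omega⟩)
    (v.injective.ne (Fin.ne_of_val_ne (Nat.lt_succ_self i.1).ne))

/-- A colouring `c i j` of the edges `{i, j}`, `i < j ≤ M`, of the complete graph on
`{0, …, M}`. -/
structure IsGallaiColoring_s13 (M : ℕ) (c : ℕ → ℕ → ℕ) : Prop where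
  path : ∀ i < M, c i (i + 1) = i
  triangle : ∀ i k j, i < k → k < j → j ≤ M → c i j = c i k ∨ c i j = c k j ∨ c i k = c k j

namespace IsGallaiColoring_s13

variable {M : ℕ} {c : ℕ → ℕ → ℕ}

theorem mem_Ico (hc : IsGallaiColoring_s13 M c) {i j : ℕ} (hij : i < j) (hj : j ≤ M) :
    i ≤ c i j ∧ c i j < j := by
  induction j with
  | zero => omega
  | succ j ih =>
    have hpath := hc.path j (by omega)
    obtain hij | rfl := Nat.lt_succ_iff_lt_or_eq.1 hij
    · have := ih hij (by omega)
      rcases hc.triangle i j (j + 1) hij (by omega) hj with h | h | h <;> omega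
    · omega

theorem apply_eq_of_subinterval (hc : IsGallaiColoring_s13 M c) {a b i j : ℕ} (hai : a ≤ i)
    (hij : i < j) (hjb : j ≤ b) (hb : b ≤ M) (hi : i ≤ c a b) (hj : c a b < j) : c i j = c a b := by
  have hright : c a j = c a b := by
    obtain rfl | hjb := hjb.eq_or_lt
    · rfl
    have := hc.mem_Ico (i := a) (j := j) (by omega) (by omega)
    have := hc.mem_Ico hjb hb
    rcases hc.triangle a j b (by omega) hjb hb with h | h | h <;> omega
  obtain rfl | hai := hai.eq_or_lt
  · exact hright
  have := hc.mem_Ico hai (by omega)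
  have := hc.mem_Ico hij (by omega)
  rcases hc.triangle a i j hai hij (by omega) with h | h | h <;> omega

theorem mono (hc : IsGallaiColoring_s13 M c) {N : ℕ} (hN : N ≤ M) : IsGallaiColoring_s13 N c :=
  ⟨fun i hi => hc.path i (by omega), fun i k j hik hkj hj => hc.triangle i k j hik hkj (by omega)⟩

theorem shift (hc : IsGallaiColoring_s13 M c) (s : ℕ) :
    IsGallaiColoring_s13 (M - s) (fun i j => c (s + i) (s + j) - s) where
  path i hi := by
    rw [← Nat.add_assoc, hc.path (s + i) (by omega)]
    omega
  triangle i k j hik hkj hj := by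
    rcases hc.triangle (s + i) (s + k) (s + j) (by omega) (by omega) (by omega) with h | h | h <;>
      simp only [h, true_or, or_true]

end IsGallaiColoring_s13

namespace BinaryTree

variable {α : Type*}

/-- With the nodes of `t` numbered `0, 1, …` in in-order, `t.lcaIco i j` is the lowest common
ancestor of the nodes `i, …, j - 1`. -/
def lcaIco : BinaryTree α → ℕ → ℕ → ℕ
  | nil, _, _ => 0
  | node _ l r, i, j =>
    if j ≤ l.numNodes then l.lcaIco i j
    else if l.numNodes < i then
      l.numNodes + 1 + r.lcaIco (i - (l.numNodes + 1)) (j - (l.numNodes + 1))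
    else l.numNodes

theorem lcaIco_node_of_le (a : α) (l r : BinaryTree α) {i j : ℕ} (hj : j ≤ l.numNodes) :
    (node a l r).lcaIco i j = l.lcaIco i j := by
  rw [lcaIco, if_pos hj]

theorem lcaIco_node_add (a : α) (l r : BinaryTree α) (i j : ℕ) (hij : i < j) :
    (node a l r).lcaIco (l.numNodes + 1 + i) (l.numNodes + 1 + j) =
      l.numNodes + 1 + r.lcaIco i j := by
  rw [lcaIco, if_neg (by omega), if_pos (by omega)]
  simp only [Nat.add_sub_cancel_left]

theorem lcaIco_node_of_le_of_lt (a : α) (l r : BinaryTree α) {i j : ℕ} (hi : i ≤ l.numNodes)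
    (hj : l.numNodes < j) : (node a l r).lcaIco i j = l.numNodes := by
  rw [lcaIco, if_neg (by omega), if_neg (by omega)]

theorem isGallaiColoring_lcaIco (t : BinaryTree α) : IsGallaiColoring_s13 t.numNodes t.lcaIco := by
  induction t with
  | nil => constructor <;> intros <;> simp_all [numNodes]
  | node a l r ihl ihr =>
    have hN : (node a l r).numNodes = l.numNodes + r.numNodes + 1 := rfl
    constructor
    · intro i hi
      rcases lt_trichotomy i l.numNodes with h | h | h
      · rw [lcaIco_node_of_le a l r (by omega), ihl.path i h]
      · rw [lcaIco_node_of_le_of_lt a l r (by omega) (by omega), h]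
      · obtain ⟨i, rfl⟩ := Nat.exists_eq_add_of_le (show l.numNodes + 1 ≤ i by omega)
        rw [Nat.add_assoc _ i, lcaIco_node_add a l r i (i + 1) (by omega), ihr.path i (by omega)]
    · intro i k j hik hkj hj
      by_cases hjL : j ≤ l.numNodes
      · simp only [lcaIco_node_of_le a l r hjL, lcaIco_node_of_le a l r (hkj.le.trans hjL)]
        exact ihl.triangle i k j hik hkj hjL
      by_cases hiL : l.numNodes < i
      · obtain ⟨i, rfl⟩ := Nat.exists_eq_add_of_le (show l.numNodes + 1 ≤ i by omega)
        obtain ⟨k, rfl⟩ := Nat.exists_eq_add_of_le (show l.numNodes + 1 ≤ k by omega)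
        obtain ⟨j, rfl⟩ := Nat.exists_eq_add_of_le (show l.numNodes + 1 ≤ j by omega)
        simp only [lcaIco_node_add a l r _ _ (by omega : i < k),
          lcaIco_node_add a l r _ _ (by omega : k < j),
          lcaIco_node_add a l r _ _ (by omega : i < j), Nat.add_left_cancel_iff]
        exact ihr.triangle i k j (by omega) (by omega) (by omega)
      rw [lcaIco_node_of_le_of_lt a l r (by omega) (by omega)]
      by_cases hkL : k ≤ l.numNodes
      · rw [lcaIco_node_of_le_of_lt a l r hkL (by omega)]; simp
      · rw [lcaIco_node_of_le_of_lt a l r (by omega) (by omega)]; simp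

/-- The inverse of `lcaIco` on Gallai colourings: the root is the colour `c 0 M` of the longest
edge. -/
def ofColoring (c : ℕ → ℕ → ℕ) : ℕ → BinaryTree Unit
  | 0 => nil
  | M + 1 =>
    let r := min (c 0 (M + 1)) M
    node () (ofColoring c r) (ofColoring (fun i j => c (r + 1 + i) (r + 1 + j) - (r + 1)) (M - r))
  decreasing_by all_goals omega

theorem numNodes_ofColoring (c : ℕ → ℕ → ℕ) (M : ℕ) : (ofColoring c M).numNodes = M := by
  induction M using Nat.strong_induction_on generalizing c with
  | _ M ih =>
    cases M with
    | zero => rw [ofColoring, numNodes]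
    | succ M =>
      rw [ofColoring, numNodes, ih _ (by omega), ih _ (by omega)]
      omega

theorem lcaIco_ofColoring {c : ℕ → ℕ → ℕ} {M : ℕ} (hc : IsGallaiColoring_s13 M c) {i j : ℕ}
    (hij : i < j) (hj : j ≤ M) : (ofColoring c M).lcaIco i j = c i j := by
  induction M using Nat.strong_induction_on generalizing c i j with
  | _ M ih =>
    obtain ⟨M, rfl⟩ : ∃ m, M = m + 1 := ⟨M - 1, by omega⟩
    have hroot := hc.mem_Ico (i := 0) (j := M + 1) (by omega) le_rfl
    rw [ofColoring, min_eq_left (by omega : c 0 (M + 1) ≤ M)]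
    set r := c 0 (M + 1)
    by_cases hjr : j ≤ r
    · rw [lcaIco_node_of_le _ _ _ (by rwa [numNodes_ofColoring]),
        ih r (by omega) (hc.mono (by omega)) hij hjr]
    by_cases hir : r < i
    · obtain ⟨i, rfl⟩ := Nat.exists_eq_add_of_le (show r + 1 ≤ i by omega)
      obtain ⟨j, rfl⟩ := Nat.exists_eq_add_of_le (show r + 1 ≤ j by omega)
      have := hc.mem_Ico hij hj
      have hnode := lcaIco_node_add () (ofColoring c r)
        (ofColoring (fun i j => c (r + 1 + i) (r + 1 + j) - (r + 1)) (M - r)) i j (by omega)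
      rw [numNodes_ofColoring] at hnode
      rw [hnode, ih (M - r) (by omega) ((hc.shift (r + 1)).mono (by omega)) (by omega) (by omega)]
      omega
    · rw [lcaIco_node_of_le_of_lt _ _ _ (by rw [numNodes_ofColoring]; omega)
        (by rw [numNodes_ofColoring]; omega), numNodes_ofColoring,
        hc.apply_eq_of_subinterval (Nat.zero_le i) hij hj le_rfl (by omega) (by omega)]

theorem eq_of_lcaIco_eq : ∀ {t s : BinaryTree Unit}, t.numNodes = s.numNodes →
    (∀ i j, i < j → j ≤ t.numNodes → t.lcaIco i j = s.lcaIco i j) → t = s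
  | nil, nil, _, _ => rfl
  | nil, node _ _ _, h, _ | node _ _ _, nil, h, _ => by simp [numNodes] at h
  | node () l r, node () l' r', h, hlca => by
    have hN : (node () l r).numNodes = l.numNodes + r.numNodes + 1 := rfl
    have hroot : l.numNodes = l'.numNodes := by
      have := hlca 0 (node () l r).numNodes (by omega) le_rfl
      rwa [lcaIco_node_of_le_of_lt _ _ _ (by omega) (by omega),
        lcaIco_node_of_le_of_lt _ _ _ (by omega) (by simp [numNodes] at h ⊢; omega)] at this
    have hl : l = l' := eq_of_lcaIco_eq hroot fun i j hij hj => by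
      have := hlca i j hij (by omega)
      rwa [lcaIco_node_of_le _ _ _ hj, lcaIco_node_of_le _ _ _ (by omega)] at this
    have hr : r = r' := eq_of_lcaIco_eq (by simp [numNodes] at h; omega) fun i j hij hj => by
      have := hlca (l.numNodes + 1 + i) (l.numNodes + 1 + j) (by omega) (by omega)
      rwa [lcaIco_node_add _ _ _ _ _ hij, hroot, lcaIco_node_add _ _ _ _ _ hij,
        Nat.add_left_cancel_iff] at this
    rw [hl, hr]

end BinaryTree

section BlockIndex

variable {ι E : Type*} {p : ι → E} {S : Setoid E}

noncomputable def blockIndex (hS : Function.Bijective fun i => Quotient.mk S (p i)) (e : E) : ι :=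
  (Equiv.ofBijective _ hS).symm ⟦e⟧

theorem blockIndex_eq_iff (hS : Function.Bijective fun i => Quotient.mk S (p i)) {e : E} {i : ι} :
    blockIndex hS e = i ↔ S.r e (p i) := by
  rw [blockIndex, Equiv.symm_apply_eq, Equiv.ofBijective_apply, Quotient.eq]

theorem blockIndex_apply (hS : Function.Bijective fun i => Quotient.mk S (p i)) (i : ι) :
    blockIndex hS (p i) = i :=
  (blockIndex_eq_iff hS).2 (S.refl _)

theorem blockIndex_eq_blockIndex_iff (hS : Function.Bijective fun i => Quotient.mk S (p i))
    {e e' : E} : blockIndex hS e = blockIndex hS e' ↔ S.r e e' := by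
  rw [blockIndex, blockIndex, (Equiv.injective _).eq_iff, Quotient.eq]

theorem bijective_mk_iff [Finite E] [Finite ι] :
    (Function.Bijective fun i => Quotient.mk S (p i)) ↔
      Nat.card (Quotient S) = Nat.card ι ∧ ∀ i j, S.r (p i) (p j) → i = j := by
  refine ⟨fun hS => ⟨(Nat.card_congr (Equiv.ofBijective _ hS)).symm,
    fun i j h => hS.1 (Quotient.sound h)⟩, fun ⟨hcard, hinj⟩ => ?_⟩
  exact (Nat.bijective_iff_injective_and_card _).2
    ⟨fun i j h => hinj i j (Quotient.exact h), hcard.symm⟩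

end BlockIndex

theorem SimpleGraph.Walk.IsTrail.exists_boundary_darts {V : Type*} {G : SimpleGraph V} {u x y : V}
    {c : G.Walk u u} (hc : c.IsTrail) (S : Set V) (hx : x ∈ c.support) (hy : y ∈ c.support)
    (hxS : x ∈ S) (hyS : y ∉ S) :
    ∃ d₁ ∈ c.darts, ∃ d₂ ∈ c.darts, d₁.edge ≠ d₂.edge ∧
      (d₁.fst ∈ S ↔ d₁.snd ∉ S) ∧ (d₂.fst ∈ S ↔ d₂.snd ∉ S) := by
  classical
  suffices key : ∀ (T : Set V) z, z ∈ c.support → u ∈ T → z ∉ T →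
      ∃ d₁ ∈ c.darts, ∃ d₂ ∈ c.darts, d₁.edge ≠ d₂.edge ∧
        (d₁.fst ∈ T ↔ d₁.snd ∉ T) ∧ (d₂.fst ∈ T ↔ d₂.snd ∉ T) by
    by_cases hu : u ∈ S
    · exact key S y hy hu hyS
    · obtain ⟨d₁, h₁, d₂, h₂, hne, hd₁, hd₂⟩ := key Sᶜ x hx hu (by simpa using hxS)
      simp only [Set.mem_compl_iff] at hd₁ hd₂
      exact ⟨d₁, h₁, d₂, h₂, hne, by tauto, by tauto⟩
  intro T z hz huT hzT
  -- a closed walk leaving `T` for `z` has to cross back on the way from `z` to `u`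
  obtain ⟨d₁, hd₁, h₁⟩ := (c.takeUntil z hz).exists_boundary_dart T huT hzT
  obtain ⟨d₂, hd₂, h₂⟩ := (c.dropUntil z hz).exists_boundary_dart Tᶜ hzT (by simpa using huT)
  have hdisj := hc.edges_nodup
  rw [← c.take_spec hz, edges_append] at hdisj
  refine ⟨d₁, c.darts_takeUntil_subset_darts hz hd₁, d₂, c.darts_dropUntil_subset_darts hz hd₂,
    fun h => List.disjoint_of_nodup_append hdisj (List.mem_map_of_mem hd₁)
      (h ▸ List.mem_map_of_mem hd₂), ?_, ?_⟩
  · tauto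
  · simp only [Set.mem_compl_iff, not_not] at h₂; tauto

section PathColorings

variable {n : ℕ}

theorem mkKEdge_comm {a b : Fin n} (h : a ≠ b) : mkKEdge a b h = mkKEdge b a h.symm := by
  apply Subtype.ext
  show unedge a b = unedge b a
  unfold unedge
  rcases h.lt_or_gt with h' | h'
  · rw [if_pos h', if_neg (asymm h')]
  · rw [if_neg (asymm h'), if_pos h']

theorem mkKEdge_fst_snd (e : KEdge n) : mkKEdge e.1.1 e.1.2 e.2.ne = e :=
  Subtype.ext (if_pos e.2)

theorem sym2_mkKEdge {a b : Fin n} (h : a ≠ b) :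
    s((mkKEdge a b h).1.1, (mkKEdge a b h).1.2) = s(a, b) := by
  unfold mkKEdge unedge
  split_ifs
  · rfl
  · exact Sym2.eq_swap

theorem KEdge.sym2_injective : Function.Injective fun e : KEdge n => s(e.1.1, e.1.2) := by
  intro e e' h
  rcases Sym2.eq_iff.1 h with ⟨h₁, h₂⟩ | ⟨h₁, h₂⟩
  · exact Subtype.ext (Prod.ext h₁ h₂)
  · exact absurd (h₁ ▸ h₂ ▸ e.2) (asymm e'.2)

variable (v : Equiv.Perm (Fin n))

def pathPos (a : Fin n) : ℕ := v.symm a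

theorem pathPos_injective : Function.Injective (pathPos v) :=
  fun _ _ h => v.symm.injective (Fin.val_injective h)

theorem pathPos_lt (a : Fin n) : pathPos v a < n :=
  (v.symm a).isLt

theorem pathPos_apply (i : Fin n) : pathPos v (v i) = i := by
  simp [pathPos]

def edgeColor (c : ℕ → ℕ → ℕ) (e : KEdge n) : ℕ :=
  c (min (pathPos v e.1.1) (pathPos v e.1.2)) (max (pathPos v e.1.1) (pathPos v e.1.2))

theorem edgeColor_mkKEdge (c : ℕ → ℕ → ℕ) {a b : Fin n} (h : a ≠ b) :
    edgeColor v c (mkKEdge a b h) =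
      c (min (pathPos v a) (pathPos v b)) (max (pathPos v a) (pathPos v b)) := by
  unfold edgeColor mkKEdge unedge
  split_ifs
  · rfl
  · rw [min_comm, max_comm]

def posEdge (i j : ℕ) (hij : i < j) (hj : j < n) : KEdge n :=
  mkKEdge (v ⟨i, hij.trans hj⟩) (v ⟨j, hj⟩) (v.injective.ne (Fin.ne_of_val_ne hij.ne))

theorem pathEdge_eq_posEdge (k : Fin (n - 1)) :
    pathEdge v k = posEdge v k (k + 1) (Nat.lt_succ_self k) (by omega) :=
  rfl

theorem edgeColor_posEdge (c : ℕ → ℕ → ℕ) {i j : ℕ} (hij : i < j) (hj : j < n) :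
    edgeColor v c (posEdge v i j hij hj) = c i j := by
  rw [posEdge, edgeColor_mkKEdge, pathPos_apply, pathPos_apply, min_eq_left hij.le,
    max_eq_right hij.le]

theorem exists_posEdge_eq (e : KEdge n) :
    ∃ i j, ∃ (hij : i < j) (hj : j < n), posEdge v i j hij hj = e := by
  have hne : pathPos v e.1.1 ≠ pathPos v e.1.2 := (pathPos_injective v).ne e.2.ne
  rcases hne.lt_or_gt with h | h
  · refine ⟨_, _, h, pathPos_lt v _, ?_⟩
    simp only [posEdge, pathPos, Fin.eta, Equiv.apply_symm_apply, mkKEdge_fst_snd]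
  · refine ⟨_, _, h, pathPos_lt v _, ?_⟩
    simp only [posEdge, pathPos, Fin.eta, Equiv.apply_symm_apply]
    rw [mkKEdge_comm, mkKEdge_fst_snd]

def colorPartition (c : ℕ → ℕ → ℕ) : Setoid (KEdge n) := Setoid.ker (edgeColor v c)

variable {c : ℕ → ℕ → ℕ}

theorem edgeColor_pathEdge (hc : IsGallaiColoring_s13 (n - 1) c) (k : Fin (n - 1)) :
    edgeColor v c (pathEdge v k) = k := by
  rw [pathEdge_eq_posEdge, edgeColor_posEdge, hc.path k k.2]

theorem edgeColor_lt (hc : IsGallaiColoring_s13 (n - 1) c) (e : KEdge n) : edgeColor v c e < n - 1 := by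
  obtain ⟨i, j, hij, hj, rfl⟩ := exists_posEdge_eq v e
  rw [edgeColor_posEdge]
  have := hc.mem_Ico hij (by omega)
  omega

theorem bijective_mk_pathEdge_colorPartition (hc : IsGallaiColoring_s13 (n - 1) c) :
    Function.Bijective fun k => Quotient.mk (colorPartition v c) (pathEdge v k) := by
  refine ⟨fun k k' h => Fin.ext ?_, Quotient.ind fun e => ⟨⟨_, edgeColor_lt v hc e⟩, ?_⟩⟩
  · have h : edgeColor v c (pathEdge v k) = edgeColor v c (pathEdge v k') := Quotient.exact h
    rwa [edgeColor_pathEdge v hc, edgeColor_pathEdge v hc] at h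
  · exact Quotient.sound (edgeColor_pathEdge v hc _)

end PathColorings

section GallaiPartitions

variable {n : ℕ} (v : Equiv.Perm (Fin n))

theorem edgeColor_eq_of_crosses {c : ℕ → ℕ → ℕ} (hc : IsGallaiColoring_s13 (n - 1) c)
    {x y a b : Fin n} (hab : a ≠ b)
    (ha : pathPos v x ≤ pathPos v a ∧ pathPos v a ≤ pathPos v y)
    (hb : pathPos v x ≤ pathPos v b ∧ pathPos v b ≤ pathPos v y)
    (hcut : pathPos v a ≤ c (pathPos v x) (pathPos v y) ↔
      ¬pathPos v b ≤ c (pathPos v x) (pathPos v y)) :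
    edgeColor v c (mkKEdge a b hab) = c (pathPos v x) (pathPos v y) := by
  have hne : pathPos v a ≠ pathPos v b := (pathPos_injective v).ne hab
  have hxy : pathPos v x < pathPos v y := by omega
  have hy := pathPos_lt v y
  have hK := hc.mem_Ico hxy (by omega)
  rw [edgeColor_mkKEdge]
  exact hc.apply_eq_of_subinterval (by omega) (by omega) (by omega) (by omega)
    (by by_cases pathPos v a ≤ c (pathPos v x) (pathPos v y) <;> omega)
    (by by_cases pathPos v a ≤ c (pathPos v x) (pathPos v y) <;> omega)

theorem isGallaiPartition_colorPartition {c : ℕ → ℕ → ℕ} (hc : IsGallaiColoring_s13 (n - 1) c) :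
    IsGallaiPartition (colorPartition v c) := by
  classical
  intro u w hw
  obtain ⟨x, hx, hxmin⟩ := w.support.toFinset.exists_min_image (pathPos v) ⟨u, by simp⟩
  obtain ⟨y, hy, hymax⟩ := w.support.toFinset.exists_max_image (pathPos v) ⟨u, by simp⟩
  simp only [List.mem_toFinset] at hx hy hxmin hymax
  have hspan : ∀ a ∈ w.support, pathPos v x ≤ pathPos v a ∧ pathPos v a ≤ pathPos v y :=
    fun a ha => ⟨hxmin a ha, hymax a ha⟩
  obtain ⟨d, hd⟩ : ∃ d, d ∈ w.darts :=
    List.exists_mem_of_length_pos (by rw [w.length_darts]; linarith [hw.three_le_length])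
  have hxy : pathPos v x < pathPos v y := by
    have := hspan _ (w.dart_fst_mem_support_of_mem_darts hd)
    have := hspan _ (w.dart_snd_mem_support_of_mem_darts hd)
    have := (pathPos_injective v).ne d.adj.ne
    omega
  set K := c (pathPos v x) (pathPos v y)
  have hK := hc.mem_Ico hxy (by have := pathPos_lt v y; omega)
  obtain ⟨d₁, hd₁, d₂, hd₂, hne, h₁, h₂⟩ := hw.isTrail.exists_boundary_darts
    {a | pathPos v a ≤ K} hx hy hK.1 (show ¬pathPos v y ≤ K by omega)
  have hcross : ∀ d ∈ w.darts, (pathPos v d.fst ≤ K ↔ ¬pathPos v d.snd ≤ K) →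
      edgeColor v c (mkKEdge d.fst d.snd d.adj.ne) = K := fun d hd hcut =>
    edgeColor_eq_of_crosses v hc _ (hspan _ (w.dart_fst_mem_support_of_mem_darts hd))
      (hspan _ (w.dart_snd_mem_support_of_mem_darts hd)) hcut
  refine ⟨mkKEdge _ _ d₁.adj.ne, mkKEdge _ _ d₂.adj.ne, ?_, ?_, ?_, ?_⟩
  · rw [sym2_mkKEdge]; exact List.mem_map_of_mem hd₁
  · rw [sym2_mkKEdge]; exact List.mem_map_of_mem hd₂
  · intro h
    have := congrArg (fun e : KEdge n => s(e.1.1, e.1.2)) h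
    simp only [sym2_mkKEdge] at this
    exact hne this
  · exact (hcross d₁ hd₁ h₁).trans (hcross d₂ hd₂ h₂).symm

theorem IsGallaiPartition.rel_of_triangle {S : Setoid (KEdge n)} (hS : IsGallaiPartition S)
    {a b c : Fin n} (hab : a ≠ b) (hbc : b ≠ c) (hac : a ≠ c) :
    S.r (mkKEdge a b hab) (mkKEdge b c hbc) ∨ S.r (mkKEdge a b hab) (mkKEdge a c hac) ∨
      S.r (mkKEdge b c hbc) (mkKEdge a c hac) := by
  let w : (⊤ : SimpleGraph (Fin n)).Walk a a := .cons hab (.cons hbc (.cons hac.symm .nil))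
  have hw : w.IsCycle := by
    simp [w, SimpleGraph.Walk.cons_isCycle_iff, SimpleGraph.Walk.cons_isPath_iff, hab, hbc, hac,
      hab.symm, hac.symm]
  obtain ⟨p, q, hp, hq, hpq, hr⟩ := hS a w hw
  have hmem : ∀ e : KEdge n, s(e.1.1, e.1.2) ∈ w.edges →
      e = mkKEdge a b hab ∨ e = mkKEdge b c hbc ∨ e = mkKEdge a c hac := by
    intro e he
    simp only [w, SimpleGraph.Walk.edges_cons, SimpleGraph.Walk.edges_nil, List.mem_cons,
      List.not_mem_nil, or_false] at he
    rcases he with h | h | h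
    · exact .inl (KEdge.sym2_injective (h.trans (sym2_mkKEdge hab).symm))
    · exact .inr (.inl (KEdge.sym2_injective (h.trans (sym2_mkKEdge hbc).symm)))
    · exact .inr (.inr (KEdge.sym2_injective
        (h.trans (Sym2.eq_swap.trans (sym2_mkKEdge hac).symm))))
  have hr' := S.symm' hr
  rcases hmem p hp with rfl | rfl | rfl <;> rcases hmem q hq with rfl | rfl | rfl <;>
    first | exact absurd rfl hpq | tauto

variable {v} {S : Setoid (KEdge n)}

noncomputable def blockColoring (v : Equiv.Perm (Fin n))
    (hS : Function.Bijective fun k => Quotient.mk S (pathEdge v k)) (i j : ℕ) : ℕ :=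
  if h : i < j ∧ j < n then (blockIndex hS (posEdge v i j h.1 h.2) : Fin (n - 1)) else 0

theorem blockColoring_of_lt (hS : Function.Bijective fun k => Quotient.mk S (pathEdge v k))
    {i j : ℕ} (hij : i < j) (hj : j < n) :
    blockColoring v hS i j = (blockIndex hS (posEdge v i j hij hj) : Fin (n - 1)) :=
  dif_pos ⟨hij, hj⟩

theorem isGallaiColoring_blockColoring (hG : IsGallaiPartition S)
    (hS : Function.Bijective fun k => Quotient.mk S (pathEdge v k)) :
    IsGallaiColoring_s13 (n - 1) (blockColoring v hS) where
  path i hi := by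
    rw [blockColoring_of_lt hS (Nat.lt_succ_self i) (by omega),
      ← pathEdge_eq_posEdge v ⟨i, hi⟩, blockIndex_apply]
  triangle i k j hik hkj hj := by
    rw [blockColoring_of_lt hS hik (by omega), blockColoring_of_lt hS hkj (by omega),
      blockColoring_of_lt hS (hik.trans hkj) (by omega)]
    simp only [Fin.val_inj, blockIndex_eq_blockIndex_iff]
    rcases hG.rel_of_triangle (a := v ⟨i, by omega⟩) (b := v ⟨k, by omega⟩) (c := v ⟨j, by omega⟩)
      (v.injective.ne (Fin.ne_of_val_ne hik.ne)) (v.injective.ne (Fin.ne_of_val_ne hkj.ne))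
      (v.injective.ne (Fin.ne_of_val_ne (hik.trans hkj).ne)) with h | h | h
    · exact .inr (.inr h)
    · exact .inl (S.symm' h)
    · exact .inr (.inl (S.symm' h))

theorem colorPartition_blockColoring
    (hS : Function.Bijective fun k => Quotient.mk S (pathEdge v k)) :
    colorPartition v (blockColoring v hS) = S := by
  refine Setoid.ext fun e e' => ?_
  obtain ⟨i, j, hij, hj, rfl⟩ := exists_posEdge_eq v e
  obtain ⟨i', j', hij', hj', rfl⟩ := exists_posEdge_eq v e'
  change edgeColor v _ _ = edgeColor v _ _ ↔ _
  rw [edgeColor_posEdge, edgeColor_posEdge, blockColoring_of_lt hS, blockColoring_of_lt hS,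
    Fin.val_inj, blockIndex_eq_blockIndex_iff]

theorem colorPartition_congr {c c' : ℕ → ℕ → ℕ} (h : ∀ i j, i < j → j < n → c i j = c' i j) :
    colorPartition v c = colorPartition v c' := by
  suffices edgeColor v c = edgeColor v c' by rw [colorPartition, colorPartition, this]
  funext e
  obtain ⟨i, j, hij, hj, rfl⟩ := exists_posEdge_eq v e
  rw [edgeColor_posEdge, edgeColor_posEdge, h i j hij hj]

theorem blockColoring_colorPartition {c : ℕ → ℕ → ℕ} (hc : IsGallaiColoring_s13 (n - 1) c) {i j : ℕ}
    (hij : i < j) (hj : j < n) :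
    blockColoring v (bijective_mk_pathEdge_colorPartition v hc) i j = c i j := by
  have hlt : c i j < n - 1 := by have := hc.mem_Ico hij (by omega); omega
  rw [blockColoring_of_lt _ hij hj, show c i j = (⟨c i j, hlt⟩ : Fin (n - 1)) from rfl,
    Fin.val_inj, blockIndex_eq_iff]
  exact (edgeColor_posEdge v c hij hj).trans (edgeColor_pathEdge v hc ⟨c i j, hlt⟩).symm

variable (v)

noncomputable def rainbowGallaiPartitionEquivTree :
    {S : Setoid (KEdge n) // IsGallaiPartition S ∧
        Function.Bijective fun k => Quotient.mk S (pathEdge v k)} ≃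
      {t : BinaryTree Unit // t.numNodes = n - 1} where
  toFun S := ⟨.ofColoring (blockColoring v S.2.2) (n - 1), BinaryTree.numNodes_ofColoring _ _⟩
  invFun t :=
    have hc : IsGallaiColoring_s13 (n - 1) t.1.lcaIco := by
      simpa only [t.2] using t.1.isGallaiColoring_lcaIco
    ⟨colorPartition v t.1.lcaIco, isGallaiPartition_colorPartition v hc,
      bijective_mk_pathEdge_colorPartition v hc⟩
  left_inv S := Subtype.ext <| by
    dsimp only
    rw [colorPartition_congr fun i j hij hj => BinaryTree.lcaIco_ofColoring
      (isGallaiColoring_blockColoring S.2.1 S.2.2) hij (by omega), colorPartition_blockColoring]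
  right_inv t := Subtype.ext <| by
    have hc : IsGallaiColoring_s13 (n - 1) t.1.lcaIco := by
      simpa only [t.2] using t.1.isGallaiColoring_lcaIco
    refine BinaryTree.eq_of_lcaIco_eq (by rw [BinaryTree.numNodes_ofColoring, t.2])
      fun i j hij hj => ?_
    rw [BinaryTree.numNodes_ofColoring] at hj
    rw [BinaryTree.lcaIco_ofColoring (isGallaiColoring_blockColoring
      (isGallaiPartition_colorPartition v hc) _) hij hj,
      blockColoring_colorPartition hc hij (by omega)]

end GallaiPartitions

theorem card_maximal_gallai_partitions_with_rainbow_path_general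
    (n : ℕ) (v : Equiv.Perm (Fin n)) :
    Nat.card {S : Setoid (KEdge n) //
        IsGallaiPartition S ∧ Nat.card (Quotient S) = n - 1 ∧
        ∀ i j : Fin (n - 1), S.r (pathEdge v i) (pathEdge v j) → i = j} =
      catalan (n - 1) := by
  have hrainbow (S : Setoid (KEdge n)) :
      (Nat.card (Quotient S) = n - 1 ∧
          ∀ i j : Fin (n - 1), S.r (pathEdge v i) (pathEdge v j) → i = j) ↔
        Function.Bijective fun k => Quotient.mk S (pathEdge v k) := by
    rw [bijective_mk_iff, Nat.card_fin]
  rw [Nat.card_congr ((Equiv.subtypeEquivRight fun S => and_congr_right' (hrainbow S)).trans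
      (rainbowGallaiPartitionEquivTree v)),
    Nat.card_congr (Equiv.subtypeEquivRight fun t => BinaryTree.mem_treesOfNumNodesEq.symm),
    Nat.card_eq_finsetCard, BinaryTree.treesOfNumNodesEq_card_eq_catalan]

/-- For `n ≥ 2` and a fixed Hamiltonian path of `K_n`, given by an ordering `v` of
the vertices, the number of maximal Gallai partitions of `K_n` (those with exactly
`n - 1` blocks) for which this path is rainbow (its `n - 1` edges lie in pairwise
distinct blocks) is the Catalan number `C_{n-1}`. -/
theorem card_maximal_gallai_partitions_with_rainbow_path
    (n : ℕ) (hn : 2 ≤ n) (v : Equiv.Perm (Fin n)) :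
    Nat.card {S : Setoid (KEdge n) //
        IsGallaiPartition S ∧ Nat.card (Quotient S) = n - 1 ∧
        ∀ i j : Fin (n - 1), S.r (pathEdge v i) (pathEdge v j) → i = j} =
      catalan (n - 1) :=
  card_maximal_gallai_partitions_with_rainbow_path_general n v
end
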